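/- Let f : X → 𝒢(Z,C) be a convex function and x₀ ∈ dom f. If x₀ solves the strict scalarized Stampacchia inequality (svi_I): for all x ∈ X and all z* ∈ C⁻∖{0}, φ_{f,z*}(x₀) = −∞ or 0 ≤ φ′_{f,z*}(x₀, x−x₀), then x₀ solves the strict set-valued Stampacchia inequality (SVI_I): for all x ∈ X, 0⁺f(x₀) ⊇ f′(x₀, x−x₀). If additionally the strong regularity condition holds at x₀, namely inf{−z*(z) : z ∈ f′(x₀,x−x₀)} = φ′_{f,z*}(x₀,x−x₀) for all x ∈ X and all z* ∈ C⁻∖{0}, then the reverse implication holds as well. -/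

import Mathlib

open Set Pointwise

noncomputable section

variable {Z : Type*} [AddCommGroup Z] [Module ℝ Z] [TopologicalSpace Z]

/-- The inf-residual `A ⊖ B = {z : B + {z} ⊆ A}`. -/
def resid (A B : Set Z) : Set Z := {z : Z | B + {z} ⊆ A}

/-- The recession cone `0⁺A`, with the convention `0⁺∅ = ∅`. -/
def recCone (A : Set Z) : Set Z := {z : Z | A.Nonempty ∧ A + {z} ⊆ A}

/-- `A ⊕ B = cl (A + B)`. -/
def oplus (A B : Set Z) : Set Z := closure (A + B)

/-- Membership in `𝒢(Z,C)`: `A = cl co (A + C)`. -/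
def IsG (C A : Set Z) : Prop := A = closure (convexHull ℝ (A + C))

/-- The set `C⁻ \ {0}` of nonzero elements of the negative dual cone. -/
def negDualNZ (C : Set Z) : Set (Z →L[ℝ] ℝ) :=
  {p : Z →L[ℝ] ℝ | (∀ c ∈ C, p c ≤ 0) ∧ p ≠ 0}

/-- `inf {-z*(z) : z ∈ A}` as an extended real. -/
def scal (p : Z →L[ℝ] ℝ) (A : Set Z) : EReal :=
  sInf ((fun z => ((-(p z) : ℝ) : EReal)) '' A)

/-- Support function `σ(z*|A) = sup {z*(z) : z ∈ A}` as an extended real. -/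
def suppF (p : Z →L[ℝ] ℝ) (A : Set Z) : EReal :=
  sSup ((fun z => ((p z : ℝ) : EReal)) '' A)

/-- Inf-residuation on the extended reals: `r ⊖ s = inf {t ∈ ℝ : r ≤ s + t}`. -/
def eresid (r s : EReal) : EReal :=
  sInf ((fun t : ℝ => (t : EReal)) '' {t : ℝ | r ≤ s + (t : EReal)})

variable {X : Type*} [AddCommGroup X] [Module ℝ X]

/-- The scalarization `φ_{f,z*}(x) = inf {-z*(z) : z ∈ f(x)}`. -/
def phi (f : X → Set Z) (p : Z →L[ℝ] ℝ) (x : X) : EReal := scal p (f x)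

/-- Convexity for set-valued functions:
`f(t x₁ + (1-t) x₂) ⊇ cl (t f(x₁) + (1-t) f(x₂))`. -/
def ConvexSV (f : X → Set Z) : Prop :=
  ∀ x₁ x₂ : X, ∀ t : ℝ, t ∈ Ioo (0:ℝ) 1 →
    closure (t • f x₁ + (1 - t) • f x₂) ⊆ f (t • x₁ + (1 - t) • x₂)

/-- The set-valued directional derivative
`f′(x,u) = ⋂_{t₀>0} cl co ⋃_{0<t<t₀} (1/t)•(f(x+tu) ⊖ f(x))`. -/
def sder (f : X → Set Z) (x u : X) : Set Z :=
  ⋂ t₀ ∈ Ioi (0:ℝ), closure (convexHull ℝ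
    (⋃ t ∈ Ioo (0:ℝ) t₀, (1 / t) • resid (f (x + t • u)) (f x)))

/-- The scalar Dini derivative `φ′_{f,z*}(x,u) = inf_{t>0} (1/t)(φ(x+tu) ⊖ φ(x))`. -/
def phiDer (f : X → Set Z) (p : Z →L[ℝ] ℝ) (x u : X) : EReal :=
  ⨅ t ∈ Ioi (0:ℝ), (((1 / t : ℝ)) : EReal) * eresid (phi f p (x + t • u)) (phi f p x)

end

/-!
If `z ∈ f′(x₀, u)` but `a + z ∉ f(x₀)` for some `a ∈ f(x₀)`, separate `a + z` from the closed
convex set `f(x₀)` by a functional `z*`. Since `f(x₀) + C ⊆ f(x₀)`, `z*` lies in `C⁻ ∖ {0}`, and it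
is bounded above on `f(x₀)`, so `φ(x₀) > -∞`. Then `φ′ ≥ 0` forces `z* ≤ 0` on every residual
`f(x₀ + t u) ⊖ f(x₀)`, hence on their closed convex hull, which contains `z`; this contradicts
`z*(a + z) > sup z*(f(x₀))`. Conversely, `z*` cannot increase along a recession direction of `f(x₀)`
when `φ(x₀) > -∞`, so strong regularity gives `φ′ = inf (-z*)(f′) ≥ 0`.
-/

theorem add_nsmul_mem_of_mem_recCone {Z : Type*} [AddCommGroup Z] {A : Set Z} {a z : Z}
    (ha : a ∈ A) (hz : z ∈ recCone A) (n : ℕ) : a + n • z ∈ A := by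
  induction n with
  | zero => simpa using ha
  | succ n ih =>
    rw [succ_nsmul, ← add_assoc]
    exact hz.2 (add_mem_add ih rfl)

section Scalarization

variable {Z : Type*} [AddCommGroup Z] [Module ℝ Z] [TopologicalSpace Z]

theorem IsG.isClosed {C A : Set Z} (h : IsG C A) : IsClosed A := by
  rw [h]
  exact isClosed_closure

theorem IsG.convex [IsTopologicalAddGroup Z] [ContinuousSMul ℝ Z] {C A : Set Z} (h : IsG C A) :
    Convex ℝ A := by
  rw [h]
  exact (convex_convexHull ℝ _).closure

theorem IsG.add_mem {C A : Set Z} (h : IsG C A) {a c : Z} (ha : a ∈ A) (hc : c ∈ C) :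
    a + c ∈ A := by
  rw [h]
  exact subset_closure (subset_convexHull ℝ _ (add_mem_add ha hc))

theorem scal_le {p : Z →L[ℝ] ℝ} {A : Set Z} {a : Z} (ha : a ∈ A) :
    scal p A ≤ ((-p a : ℝ) : EReal) :=
  sInf_le ⟨a, ha, rfl⟩

theorem le_scal {p : Z →L[ℝ] ℝ} {A : Set Z} {r : ℝ} (h : ∀ a ∈ A, r ≤ -p a) :
    (r : EReal) ≤ scal p A :=
  le_sInf <| by
    rintro _ ⟨a, ha, rfl⟩
    exact EReal.coe_le_coe_iff.2 (h a ha)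

theorem scal_le_scal_add_of_mem_resid {p : Z →L[ℝ] ℝ} {A B : Set Z} {v : Z}
    (hv : v ∈ resid A B) : scal p A ≤ scal p B + ((-p v : ℝ) : EReal) := by
  rw [← EReal.sub_le_iff_le_add (.inl (EReal.coe_ne_bot _)) (.inl (EReal.coe_ne_top _))]
  refine le_sInf ?_
  rintro _ ⟨b, hb, rfl⟩
  refine EReal.sub_le_of_le_add ((scal_le (hv (add_mem_add hb rfl))).trans_eq ?_)
  rw [← EReal.coe_add, map_add, neg_add]

theorem eresid_le_of_le_add {r s : EReal} {t : ℝ} (h : r ≤ s + t) : eresid r s ≤ t :=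
  sInf_le ⟨t, h, rfl⟩

theorem apply_nonpos_of_mem_recCone {p : Z →L[ℝ] ℝ} {A : Set Z} {z : Z}
    (hA : scal p A ≠ ⊥) (hz : z ∈ recCone A) : p z ≤ 0 := by
  obtain ⟨a, ha⟩ := hz.1
  obtain ⟨m, -, hm⟩ := EReal.lt_iff_exists_real_btwn.1 (bot_lt_iff_ne_bot.2 hA)
  have hbound (n : ℕ) : n * p z < -p a - m := by
    have := hm.trans_le (scal_le (add_nsmul_mem_of_mem_recCone ha hz n))
    rw [EReal.coe_lt_coe_iff, map_add, map_nsmul, nsmul_eq_mul] at this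
    linarith
  by_contra! hpz
  obtain ⟨n, hn⟩ := exists_nat_gt ((-p a - m) / p z)
  exact (hbound n).not_ge ((div_lt_iff₀ hpz).1 hn).le

theorem exists_mem_negDualNZ_separation
    [IsTopologicalAddGroup Z] [ContinuousSMul ℝ Z] [LocallyConvexSpace ℝ Z]
    {C A : Set Z} (hCcone : ∀ c ∈ C, ∀ r : ℝ, 0 < r → r • c ∈ C) (hA : IsG C A)
    (hne : A.Nonempty) {y : Z} (hy : y ∉ A) :
    ∃ p ∈ negDualNZ C, ∃ u : ℝ, (∀ a ∈ A, p a < u) ∧ u < p y := by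
  obtain ⟨p, u, hpA, hpy⟩ := geometric_hahn_banach_closed_point hA.convex hA.isClosed hy
  obtain ⟨a, ha⟩ := hne
  refine ⟨p, ⟨fun c hc => ?_, fun hp => ?_⟩, u, hpA, hpy⟩
  · -- otherwise `p` is unbounded above on the ray `a + ℝ₊ c ⊆ A`
    by_contra! hpc
    have hr : 0 < (u - p a + 1) / p c := div_pos (by linarith [hpA a ha]) hpc
    have := hpA _ (hA.add_mem ha (hCcone c hc _ hr))
    rw [map_add, map_smul, smul_eq_mul, div_mul_cancel₀ _ hpc.ne'] at this
    linarith
  · have := hpA a ha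
    simp only [hp, zero_apply] at this hpy
    linarith

end Scalarization

section Derivatives

variable {Z : Type*} [AddCommGroup Z] [Module ℝ Z] [TopologicalSpace Z]
  {X : Type*} [AddCommGroup X] [Module ℝ X]

theorem eresid_nonneg_of_phiDer_nonneg {f : X → Set Z} {p : Z →L[ℝ] ℝ} {x u : X} {t : ℝ}
    (hder : 0 ≤ phiDer f p x u) (ht : 0 < t) :
    0 ≤ eresid (phi f p (x + t • u)) (phi f p x) := by
  have hmul := hder.trans (iInf₂_le t ht : phiDer f p x u ≤ _)
  rcases EReal.mul_nonneg_iff.1 hmul with h | h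
  · exact h.2
  · exact absurd h.1 (not_le.2 (EReal.coe_pos.2 (one_div_pos.2 ht)))

theorem apply_nonpos_of_mem_sder {f : X → Set Z} {p : Z →L[ℝ] ℝ} {x u : X} {z : Z}
    (hder : 0 ≤ phiDer f p x u) (hz : z ∈ sder f x u) : p z ≤ 0 := by
  refine closure_minimal (convexHull_min ?_ (convex_halfSpace_le p.toLinearMap.isLinear 0))
    (isClosed_le p.continuous continuous_const) (mem_iInter₂.1 hz 1 (mem_Ioi.2 one_pos))
  simp only [iUnion_subset_iff]
  rintro t ⟨ht, -⟩ _ ⟨v, hv, rfl⟩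
  have hpv : ((0 : ℝ) : EReal) ≤ ((-p v : ℝ) : EReal) :=
    (eresid_nonneg_of_phiDer_nonneg hder ht).trans
      (eresid_le_of_le_add (scal_le_scal_add_of_mem_resid hv))
  show p ((1 / t) • v) ≤ 0
  rw [map_smul, smul_eq_mul]
  exact mul_nonpos_of_nonneg_of_nonpos (one_div_pos.2 ht).le
    (neg_nonneg.1 (EReal.coe_le_coe_iff.1 hpv))

theorem sder_subset_recCone
    [IsTopologicalAddGroup Z] [ContinuousSMul ℝ Z] [LocallyConvexSpace ℝ Z]
    {C : Set Z} (hCcone : ∀ c ∈ C, ∀ r : ℝ, 0 < r → r • c ∈ C) {f : X → Set Z} {x u : X}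
    (hG : IsG C (f x)) (hne : (f x).Nonempty)
    (h : ∀ p ∈ negDualNZ C, phi f p x = ⊥ ∨ 0 ≤ phiDer f p x u) :
    sder f x u ⊆ recCone (f x) := by
  intro z hz
  refine ⟨hne, ?_⟩
  rintro _ ⟨a, ha, _, rfl, rfl⟩
  by_contra hy
  obtain ⟨p, hp, r, hpA, hpy⟩ := exists_mem_negDualNZ_separation hCcone hG hne hy
  have hφ : phi f p x ≠ ⊥ :=
    ne_bot_of_le_ne_bot (EReal.coe_ne_bot (-r)) (le_scal fun b hb => by linarith [hpA b hb])
  have hpz := apply_nonpos_of_mem_sder ((h p hp).resolve_left hφ) hz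
  rw [map_add] at hpy
  linarith [hpA a ha]

theorem phiDer_nonneg_of_sder_subset_recCone {f : X → Set Z} {p : Z →L[ℝ] ℝ} {x u : X}
    (hreg : scal p (sder f x u) = phiDer f p x u) (hsub : sder f x u ⊆ recCone (f x)) :
    phi f p x = ⊥ ∨ 0 ≤ phiDer f p x u := by
  refine or_iff_not_imp_left.2 fun hφ => hreg ▸ ?_
  exact_mod_cast le_scal fun z hz => neg_nonneg.2 (apply_nonpos_of_mem_recCone hφ (hsub hz))

end Derivatives

theorem stmt_10_general
  {Z : Type*} [AddCommGroup Z] [Module ℝ Z] [TopologicalSpace Z]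
  [IsTopologicalAddGroup Z] [ContinuousSMul ℝ Z] [LocallyConvexSpace ℝ Z]
  {X : Type*} [AddCommGroup X] [Module ℝ X]
  (C : Set Z)
  (hCcone : ∀ c ∈ C, ∀ r : ℝ, 0 < r → r • c ∈ C)
  (f : X → Set Z) (hG : ∀ x, IsG C (f x))
  (x₀ : X) (hx₀ : (f x₀).Nonempty) :
    ((∀ x : X, ∀ p ∈ negDualNZ C,
      phi f p x₀ = ⊥ ∨ (0:EReal) ≤ phiDer f p x₀ (x - x₀)) → (∀ x : X, sder f x₀ (x - x₀) ⊆ recCone (f x₀)))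
    ∧ ((∀ x : X, ∀ p ∈ negDualNZ C,
          scal p (sder f x₀ (x - x₀)) = phiDer f p x₀ (x - x₀)) →
        ((∀ x : X, sder f x₀ (x - x₀) ⊆ recCone (f x₀)) → (∀ x : X, ∀ p ∈ negDualNZ C,
      phi f p x₀ = ⊥ ∨ (0:EReal) ≤ phiDer f p x₀ (x - x₀)))) :=
  ⟨fun h x => sder_subset_recCone hCcone (hG x₀) hx₀ (h x),
    fun hreg hsub x p hp => phiDer_nonneg_of_sder_subset_recCone (hreg x p hp) (hsub x)⟩

theorem stmt_10
  {Z : Type*} [AddCommGroup Z] [Module ℝ Z] [TopologicalSpace Z]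
  [IsTopologicalAddGroup Z] [ContinuousSMul ℝ Z] [LocallyConvexSpace ℝ Z] [T2Space Z]
  {X : Type*} [AddCommGroup X] [Module ℝ X]
  (C : Set Z) (hCclosed : IsClosed C) (hCconv : Convex ℝ C)
  (hCcone : ∀ c ∈ C, ∀ r : ℝ, 0 < r → r • c ∈ C) (hC0 : (0:Z) ∈ C)
  (hdual : (negDualNZ C).Nonempty)
  (f : X → Set Z) (hG : ∀ x, IsG C (f x)) (hf : ConvexSV f)
  (x₀ : X) (hx₀ : (f x₀).Nonempty) :
    ((∀ x : X, ∀ p ∈ negDualNZ C,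
      phi f p x₀ = ⊥ ∨ (0:EReal) ≤ phiDer f p x₀ (x - x₀)) → (∀ x : X, sder f x₀ (x - x₀) ⊆ recCone (f x₀)))
    ∧ ((∀ x : X, ∀ p ∈ negDualNZ C,
          scal p (sder f x₀ (x - x₀)) = phiDer f p x₀ (x - x₀)) →
        ((∀ x : X, sder f x₀ (x - x₀) ⊆ recCone (f x₀)) → (∀ x : X, ∀ p ∈ negDualNZ C,
      phi f p x₀ = ⊥ ∨ (0:EReal) ≤ phiDer f p x₀ (x - x₀)))) :=
  stmt_10_general C hCcone f hG x₀ hx₀
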